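/- The function X₀ satisfies: (1) X₀(−x) = X₀(x) and X₀(x) ≥ 5/2 for all x ∈ ℝ; (2) g(x) > 0 for all x ∈ ℝ, where g is the analytic extension of X₀'(x)/x with g(0) = 2 (equivalently X₀'(x)/x > 0 for x ≠ 0); and (3) 2X₀(x) − x X₀'(x) > 0 for all x ∈ ℝ. -/

import Mathlib

open Real Set

/-- Coefficient decay bound. -/
lemma stmt5_abnd (a : ℕ → ℝ) (ha1 : a 1 = 1)
    (harec : ∀ k : ℕ, 1 ≤ k →
      2 * ((k : ℝ) + 1) * (4 * (k : ℝ) ^ 2 + 5 / 4) * a (k + 1) + (2 * (k : ℝ) - 1) * a k = 0) :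
    ∀ k : ℕ, (4:ℝ)^k * (k.factorial : ℝ) * ((k+1).factorial : ℝ) * |a (k+1)| ≤ 1 := by
  intro k
  induction k with
  | zero => simp [ha1]
  | succ k ih =>
    have hrec := harec (k+1) (by omega)
    push_cast at hrec
    -- |a(k+2)| relation
    have habs : 2 * ((k:ℝ) + 1 + 1) * (4 * ((k:ℝ)+1) ^ 2 + 5 / 4) * |a (k + 2)|
        = (2 * ((k:ℝ)+1) - 1) * |a (k + 1)| := by
      have h1 : 2 * ((k:ℝ) + 1 + 1) * (4 * ((k:ℝ)+1) ^ 2 + 5 / 4) * a (k + 2)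
          = (2 * ((k:ℝ)+1) - 1) * (- a (k + 1)) := by linarith
      have h2 : |2 * ((k:ℝ) + 1 + 1) * (4 * ((k:ℝ)+1) ^ 2 + 5 / 4)| * |a (k + 2)|
          = |(2 * ((k:ℝ)+1) - 1)| * |a (k + 1)| := by
        rw [← abs_mul, h1, abs_mul, abs_neg]
      have e1 : |2 * ((k:ℝ) + 1 + 1) * (4 * ((k:ℝ)+1) ^ 2 + 5 / 4)|
          = 2 * ((k:ℝ) + 1 + 1) * (4 * ((k:ℝ)+1) ^ 2 + 5 / 4) := by
        apply abs_of_pos; positivity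
      have e2 : |(2 * ((k:ℝ)+1) - 1)| = 2 * ((k:ℝ)+1) - 1 := by
        apply abs_of_pos
        have : (0:ℝ) ≤ (k:ℝ) := Nat.cast_nonneg k
        linarith
      rw [e1, e2] at h2
      exact h2
    -- step inequality : 4*(k+1)*(k+2)*|a (k+2)| ≤ |a (k+1)|
    have hstep : 4 * ((k:ℝ)+1) * ((k:ℝ)+2) * |a (k+2)| ≤ |a (k+1)| := by
      have hk : (0:ℝ) ≤ (k:ℝ) := Nat.cast_nonneg k
      nlinarith [abs_nonneg (a (k+2)), abs_nonneg (a (k+1)), habs]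
    have hf1 : ((k+1).factorial : ℝ) = ((k:ℝ)+1) * (k.factorial : ℝ) := by
      rw [Nat.factorial_succ]; push_cast; ring
    have hf2 : ((k+2).factorial : ℝ) = ((k:ℝ)+2) * ((k+1).factorial : ℝ) := by
      rw [show k+2 = (k+1)+1 from rfl, Nat.factorial_succ ((k+1))]; push_cast; ring
    have hpos : (0:ℝ) < (4:ℝ)^k * (k.factorial : ℝ) * ((k+1).factorial : ℝ) := by positivity
    calc (4:ℝ)^(k+1) * ((k+1).factorial : ℝ) * ((k+1+1).factorial : ℝ) * |a (k+1+1)|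
        = ((4:ℝ)^k * (k.factorial : ℝ) * ((k+1).factorial : ℝ)) *
            (4 * ((k:ℝ)+1) * ((k:ℝ)+2) * |a (k+2)|) := by
          rw [show k+1+1 = k+2 from rfl, hf2, hf1, pow_succ]; ring
      _ ≤ ((4:ℝ)^k * (k.factorial : ℝ) * ((k+1).factorial : ℝ)) * |a (k+1)| := by
          apply mul_le_mul_of_nonneg_left hstep (le_of_lt hpos)
      _ ≤ 1 := ih

/-- Cube growth bound. -/
lemma stmt5_cube : ∀ k : ℕ, (2*(k:ℝ)+3)^3 ≤ 27 * 4^k * ((k+1).factorial : ℝ) := by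
  intro k
  induction k with
  | zero => norm_num
  | succ k ih =>
    have hk : (0:ℝ) ≤ (k:ℝ) := Nat.cast_nonneg k
    have hf2 : ((k+2).factorial : ℝ) = ((k:ℝ)+2) * ((k+1).factorial : ℝ) := by
      rw [show k+2 = (k+1)+1 from rfl, Nat.factorial_succ ((k+1))]; push_cast; ring
    have h8 : (2*((k:ℝ)+1)+3)^3 ≤ 8 * (2*(k:ℝ)+3)^3 := by nlinarith [sq_nonneg ((k:ℝ)+1), hk, mul_nonneg hk hk, mul_nonneg (mul_nonneg hk hk) hk]
    have hfpos : (0:ℝ) < ((k+1).factorial : ℝ) := by positivity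
    have h4 : (0:ℝ) < (4:ℝ)^k := by positivity
    push_cast
    calc (2*((k:ℝ)+1)+3)^3 ≤ 8 * (2*(k:ℝ)+3)^3 := h8
      _ ≤ 8 * (27 * 4^k * ((k+1).factorial : ℝ)) := by nlinarith
      _ ≤ 27 * 4^(k+1) * ((k+1+1).factorial : ℝ) := by
          rw [show k+1+1 = k+2 from rfl, hf2, pow_succ]; nlinarith [mul_nonneg (mul_nonneg (le_of_lt h4) (le_of_lt hfpos)) hk]

/-- Master summability comparison. -/
lemma stmt5_summable (a : ℕ → ℝ)
    (hb : ∀ k : ℕ, (4:ℝ)^k * (k.factorial : ℝ) * ((k+1).factorial : ℝ) * |a (k+1)| ≤ 1)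
    (Cst r : ℝ) (hC : 0 ≤ Cst) (hr : 0 ≤ r) (t : ℕ → ℝ)
    (ht : ∀ k, |t k| ≤ Cst * ((2*(k:ℝ)+3)^3 * |a (k+1)| * r^k)) : Summable t := by
  apply Summable.of_abs
  have hmaj : Summable (fun k : ℕ => Cst * (27 * (r^k / (k.factorial : ℝ)))) :=
    ((Real.summable_pow_div_factorial r).mul_left 27).mul_left Cst
  apply Summable.of_nonneg_of_le (fun k => abs_nonneg _) _ hmaj
  intro k
  refine (ht k).trans (mul_le_mul_of_nonneg_left ?_ hC)
  have hfpos : (0:ℝ) < (k.factorial : ℝ) := by positivity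
  have hkey : (2*(k:ℝ)+3)^3 * |a (k+1)| * (k.factorial : ℝ) ≤ 27 := by
    calc (2*(k:ℝ)+3)^3 * |a (k+1)| * (k.factorial : ℝ)
        ≤ (27 * 4^k * ((k+1).factorial : ℝ)) * |a (k+1)| * (k.factorial : ℝ) := by
          apply mul_le_mul_of_nonneg_right
            (mul_le_mul_of_nonneg_right (stmt5_cube k) (abs_nonneg _)) (le_of_lt hfpos)
      _ = 27 * ((4:ℝ)^k * (k.factorial : ℝ) * ((k+1).factorial : ℝ) * |a (k+1)|) := by ring
      _ ≤ 27 * 1 := by linarith [hb k]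
      _ = 27 := by norm_num
  have h1 : (2*(k:ℝ)+3)^3 * |a (k+1)| ≤ 27 / (k.factorial : ℝ) :=
    (le_div_iff₀ hfpos).mpr hkey
  calc (2*(k:ℝ)+3)^3 * |a (k+1)| * r^k ≤ (27 / (k.factorial : ℝ)) * r^k :=
        mul_le_mul_of_nonneg_right h1 (pow_nonneg hr k)
    _ = 27 * (r^k / (k.factorial : ℝ)) := by ring

/-- Differentiation of a series of functions with locally uniform summable bounds. -/
lemma stmt5_hasDeriv (f f' : ℕ → ℝ → ℝ) (u : ℝ → ℕ → ℝ)
    (hd : ∀ k y, HasDerivAt (f k) (f' k y) y)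
    (hu : ∀ R : ℝ, 1 ≤ R → Summable (u R))
    (hbound : ∀ R : ℝ, 1 ≤ R → ∀ k, ∀ y : ℝ, |y| ≤ R → |f' k y| ≤ u R k)
    (hs0 : Summable (fun k => f k 0)) (x : ℝ) :
    HasDerivAt (fun z => ∑' k, f k z) (∑' k, f' k x) x := by
  have hR1 : 1 ≤ |x| + 1 := by have := abs_nonneg x; linarith
  refine hasDerivAt_tsum_of_isPreconnected (hu (|x|+1) hR1) Metric.isOpen_ball
    ((convex_ball (0:ℝ) (|x|+1)).isPreconnected) (fun k y _ => hd k y) ?_ ?_ hs0 ?_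
  · intro k y hy
    rw [Real.norm_eq_abs]
    refine hbound (|x|+1) hR1 k y (le_of_lt ?_)
    simpa [Real.norm_eq_abs] using mem_ball_zero_iff.mp hy
  · rw [mem_ball_zero_iff, norm_zero]
    linarith [abs_nonneg x]
  · rw [mem_ball_zero_iff, Real.norm_eq_abs]
    linarith

set_option maxHeartbeats 3200000 in
/-- `X₀` satisfies: (1) `X₀(−x) = X₀(x)` and `X₀(x) ≥ 5/2` for all `x`;
(2) `g(x) > 0` for all `x` (equivalently `X₀'(x)/x > 0` for `x ≠ 0`), where `g` is the analytic
extension of `X₀'(x)/x` with `g(0) = 2`; and (3) `2X₀(x) − x X₀'(x) > 0` for all `x`. -/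
theorem stmt5 (a : ℕ → ℝ) (ha1 : a 1 = 1)
    (harec : ∀ k : ℕ, 1 ≤ k →
      2 * ((k : ℝ) + 1) * (4 * (k : ℝ) ^ 2 + 5 / 4) * a (k + 1) + (2 * (k : ℝ) - 1) * a k = 0)
    (X0 : ℝ → ℝ)
    (hX0 : ∀ x : ℝ, HasSum (fun k : ℕ => a (k + 1) * x ^ (2 * (k + 1))) (X0 x - 5 / 2))
    (g : ℝ → ℝ) (hganal : AnalyticOnNhd ℝ g Set.univ)
    (hg : ∀ x : ℝ, x ≠ 0 → g x = deriv X0 x / x) (hg0 : g 0 = 2) :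
    (∀ x : ℝ, X0 (-x) = X0 x) ∧
    (∀ x : ℝ, 5 / 2 ≤ X0 x) ∧
    (∀ x : ℝ, 0 < g x) ∧
    (∀ x : ℝ, x ≠ 0 → 0 < deriv X0 x / x) ∧
    (∀ x : ℝ, 0 < 2 * X0 x - x * deriv X0 x) := by
  have hb := stmt5_abnd a ha1 harec
  -- term functions for the series of g and its derivatives
  set f1 : ℕ → ℝ → ℝ := fun k z => (2*(k:ℝ)+2) * a (k+1) * (z^2)^k with hf1
  set f1' : ℕ → ℝ → ℝ := fun k z => (2*(k:ℝ)) * ((2*(k:ℝ)+2) * a (k+1)) * z^(2*k-1) with hf1'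
  set f2' : ℕ → ℝ → ℝ :=
    fun k z => (2*(k:ℝ)-1) * ((2*(k:ℝ)) * ((2*(k:ℝ)+2) * a (k+1))) * z^(2*k-2) with hf2'
  set G : ℝ → ℝ := fun x => ∑' k, f1 k x with hGdef
  set G1 : ℝ → ℝ := fun x => ∑' k, f1' k x with hG1def
  set G2 : ℝ → ℝ := fun x => ∑' k, f2' k x with hG2def
  -- termwise derivatives
  have hd0 : ∀ (k : ℕ) (y : ℝ), HasDerivAt (fun z => a (k+1) * z^(2*(k+1)))
      ((2*(k:ℝ)+2) * a (k+1) * y^(2*k+1)) y := by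
    intro k y
    have h := (hasDerivAt_pow (2*(k+1)) y).const_mul (a (k+1))
    refine h.congr_deriv ?_
    rw [show 2*(k+1)-1 = 2*k+1 from by omega]
    push_cast
    ring
  have hd1 : ∀ (k : ℕ) (y : ℝ), HasDerivAt (f1 k) (f1' k y) y := by
    intro k y
    have hfe : f1 k = fun z => ((2*(k:ℝ)+2) * a (k+1)) * z^(2*k) := by
      funext z
      simp only [hf1]
      rw [← pow_mul]
    rw [hfe]
    have h := (hasDerivAt_pow (2*k) y).const_mul ((2*(k:ℝ)+2) * a (k+1))
    refine h.congr_deriv ?_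
    simp only [hf1']
    push_cast
    ring
  have hd2 : ∀ (k : ℕ) (y : ℝ), HasDerivAt (f1' k) (f2' k y) y := by
    intro k y
    have h := (hasDerivAt_pow (2*k-1) y).const_mul ((2*(k:ℝ)) * ((2*(k:ℝ)+2) * a (k+1)))
    refine h.congr_deriv ?_
    cases k with
    | zero => simp [hf2']
    | succ m =>
      simp only [hf2']
      rw [show 2*(m+1)-1 = 2*m+1 from by omega, show 2*(m+1)-2 = 2*m from by omega,
        show 2*m+1-1 = 2*m from by omega]
      push_cast
      ring
  -- summability at every point
  have hsum1 : ∀ x : ℝ, Summable (fun k => f1 k x) := by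
    intro x
    apply stmt5_summable a hb 1 (x^2) zero_le_one (sq_nonneg x)
    intro k
    have hk : (0:ℝ) ≤ (k:ℝ) := Nat.cast_nonneg k
    have hx : (0:ℝ) ≤ (x^2)^k := by positivity
    simp only [hf1]
    rw [abs_mul, abs_mul, abs_of_nonneg (by positivity : (0:ℝ) ≤ 2*(k:ℝ)+2), abs_of_nonneg hx,
      one_mul]
    have hc : (2*(k:ℝ)+2) ≤ (2*(k:ℝ)+3)^3 := by
      nlinarith [hk, mul_nonneg hk hk, mul_nonneg (mul_nonneg hk hk) hk]
    exact mul_le_mul_of_nonneg_right (mul_le_mul_of_nonneg_right hc (abs_nonneg _)) hx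
  have hsum1' : ∀ x : ℝ, Summable (fun k => f1' k x) := by
    intro x
    apply stmt5_summable a hb 1 ((1+|x|)^2) zero_le_one (by positivity)
    intro k
    have hk : (0:ℝ) ≤ (k:ℝ) := Nat.cast_nonneg k
    have h1x : (1:ℝ) ≤ 1 + |x| := by linarith [abs_nonneg x]
    simp only [hf1', one_mul, abs_mul, abs_pow, abs_two, Nat.abs_cast,
      abs_of_nonneg (show (0:ℝ) ≤ 2*(k:ℝ)+2 by positivity)]
    rw [← pow_mul]
    have hpow : |x|^(2*k-1) ≤ (1+|x|)^(2*k) :=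
      le_trans (pow_le_pow_left₀ (abs_nonneg x) (by linarith) _)
        (pow_le_pow_right₀ h1x (by omega))
    have hc : 2*(k:ℝ) * ((2*(k:ℝ)+2) * |a (k+1)|) ≤ (2*(k:ℝ)+3)^3 * |a (k+1)| := by
      have h3 : (2*(k:ℝ)) * (2*(k:ℝ)+2) ≤ (2*(k:ℝ)+3)^3 := by
        nlinarith [hk, mul_nonneg hk hk, mul_nonneg (mul_nonneg hk hk) hk]
      nlinarith [mul_le_mul_of_nonneg_right h3 (abs_nonneg (a (k+1)))]
    calc 2*(k:ℝ) * ((2*(k:ℝ)+2) * |a (k+1)|) * |x|^(2*k-1)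
        ≤ ((2*(k:ℝ)+3)^3 * |a (k+1)|) * (1+|x|)^(2*k) := by
          apply mul_le_mul hc hpow (by positivity) (by positivity)
      _ = (2*(k:ℝ)+3)^3 * |a (k+1)| * (1+|x|)^(2*k) := by ring
  have hsum2' : ∀ x : ℝ, Summable (fun k => f2' k x) := by
    intro x
    apply stmt5_summable a hb 1 ((1+|x|)^2) zero_le_one (by positivity)
    intro k
    have hk : (0:ℝ) ≤ (k:ℝ) := Nat.cast_nonneg k
    have h1x : (1:ℝ) ≤ 1 + |x| := by linarith [abs_nonneg x]
    simp only [hf2', one_mul, abs_mul, abs_pow, abs_two, Nat.abs_cast,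
      abs_of_nonneg (show (0:ℝ) ≤ 2*(k:ℝ)+2 by positivity)]
    rw [← pow_mul]
    have hpow : |x|^(2*k-2) ≤ (1+|x|)^(2*k) :=
      le_trans (pow_le_pow_left₀ (abs_nonneg x) (by linarith) _)
        (pow_le_pow_right₀ h1x (by omega))
    have h1 : |2*(k:ℝ)-1| ≤ 2*(k:ℝ)+1 := by
      rw [abs_le]; constructor <;> linarith
    have hc : |2*(k:ℝ)-1| * (2*(k:ℝ) * ((2*(k:ℝ)+2) * |a (k+1)|)) ≤ (2*(k:ℝ)+3)^3 * |a (k+1)| := by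
      have h3 : (2*(k:ℝ)+1) * ((2*(k:ℝ)) * (2*(k:ℝ)+2)) ≤ (2*(k:ℝ)+3)^3 := by
        nlinarith [hk, mul_nonneg hk hk, mul_nonneg (mul_nonneg hk hk) hk]
      have h4 : |2*(k:ℝ)-1| * (2*(k:ℝ) * ((2*(k:ℝ)+2) * |a (k+1)|))
          ≤ (2*(k:ℝ)+1) * (2*(k:ℝ) * ((2*(k:ℝ)+2) * |a (k+1)|)) :=
        mul_le_mul_of_nonneg_right h1 (by positivity)
      nlinarith [mul_le_mul_of_nonneg_right h3 (abs_nonneg (a (k+1)))]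
    calc |2*(k:ℝ)-1| * (2*(k:ℝ) * ((2*(k:ℝ)+2) * |a (k+1)|)) * |x|^(2*k-2)
        ≤ ((2*(k:ℝ)+3)^3 * |a (k+1)|) * (1+|x|)^(2*k) := by
          apply mul_le_mul hc hpow (by positivity) (by positivity)
      _ = (2*(k:ℝ)+3)^3 * |a (k+1)| * (1+|x|)^(2*k) := by ring
  -- the uniform bound sequence
  set u : ℝ → ℕ → ℝ := fun (R : ℝ) (k : ℕ) => R * ((2*(k:ℝ)+3)^3 * |a (k+1)| * (R^2)^k) with hu_def
  have husum : ∀ R : ℝ, 1 ≤ R → Summable (u R) := by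
    intro R hR
    apply stmt5_summable a hb R (R^2) (by linarith) (sq_nonneg R)
    intro k
    have h0 : (0:ℝ) ≤ (2*(k:ℝ)+3)^3 * |a (k+1)| * (R^2)^k := by positivity
    rw [hu_def]
    rw [abs_of_nonneg (mul_nonneg (by linarith) h0)]
  -- generic bound helper : for |y| ≤ R, 1 ≤ R, coefficient bound gives u-bound
  have hbnd : ∀ R : ℝ, 1 ≤ R → ∀ (k e : ℕ) (c y : ℝ), e ≤ 2*k+1 →
      |c| ≤ (2*(k:ℝ)+3)^3 * |a (k+1)| → |y| ≤ R → |c * y^e| ≤ u R k := by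
    intro R hR k e c y he hc hy
    have hy0 : (0:ℝ) ≤ |y| := abs_nonneg y
    have hR0 : (0:ℝ) ≤ R := by linarith
    have hpow : |y|^e ≤ R^(2*k+1) :=
      le_trans (pow_le_pow_left₀ hy0 hy e) (pow_le_pow_right₀ hR he)
    have hRe : R^(2*k+1) = R * (R^2)^k := by
      rw [← pow_mul, ← pow_succ']
    rw [abs_mul, abs_pow, hu_def]
    calc |c| * |y|^e ≤ ((2*(k:ℝ)+3)^3 * |a (k+1)|) * R^(2*k+1) :=
          mul_le_mul hc hpow (by positivity) (by positivity)
      _ = R * ((2*(k:ℝ)+3)^3 * |a (k+1)| * (R^2)^k) := by rw [hRe]; ring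
  -- derivatives of the three sums
  have hX0d : ∀ x : ℝ, HasDerivAt X0 (x * G x) x := by
    intro x
    have h0 : HasDerivAt (fun z => ∑' k, a (k+1) * z^(2*(k+1)))
        (∑' (k:ℕ), (2*(k:ℝ)+2) * a (k+1) * x^(2*k+1)) x := by
      apply stmt5_hasDeriv _ _ u hd0 husum _ ((hX0 0).summable) x
      intro R hR k y hy
      apply hbnd R hR k (2*k+1) _ y (le_refl _) _ hy
      rw [abs_mul, abs_of_nonneg (show (0:ℝ) ≤ 2*(k:ℝ)+2 by positivity)]
      have hk : (0:ℝ) ≤ (k:ℝ) := Nat.cast_nonneg k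
      have hc : (2*(k:ℝ)+2) ≤ (2*(k:ℝ)+3)^3 := by
        nlinarith [hk, mul_nonneg hk hk, mul_nonneg (mul_nonneg hk hk) hk]
      exact mul_le_mul_of_nonneg_right hc (abs_nonneg _)
    have hXeq : X0 = fun z => 5/2 + ∑' k, a (k+1) * z^(2*(k+1)) := by
      funext z
      have := (hX0 z).tsum_eq
      linarith
    rw [hXeq]
    have h1 := (hasDerivAt_const x (5/2 : ℝ)).add h0
    refine h1.congr_deriv ?_
    rw [zero_add, hGdef]
    simp only
    rw [← tsum_mul_left]
    apply tsum_congr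
    intro k
    simp only [hf1]
    have hxp : x^(2*k+1) = (x^2)^k * x := by rw [← pow_mul, ← pow_succ]
    rw [hxp]
    ring
  have hGd : ∀ x : ℝ, HasDerivAt G (G1 x) x := by
    intro x
    rw [hGdef, hG1def]
    simp only
    apply stmt5_hasDeriv f1 f1' u hd1 husum _ (hsum1 0) x
    intro R hR k y hy
    apply hbnd R hR k (2*k-1) _ y (by omega) _ hy
    simp only [hf1', abs_mul, abs_two, Nat.abs_cast,
      abs_of_nonneg (show (0:ℝ) ≤ 2*(k:ℝ)+2 by positivity)]
    have hk : (0:ℝ) ≤ (k:ℝ) := Nat.cast_nonneg k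
    have hc : 2*(k:ℝ) * (2*(k:ℝ)+2) ≤ (2*(k:ℝ)+3)^3 := by
      nlinarith [hk, mul_nonneg hk hk, mul_nonneg (mul_nonneg hk hk) hk]
    nlinarith [mul_le_mul_of_nonneg_right hc (abs_nonneg (a (k+1)))]
  have hG1d : ∀ x : ℝ, HasDerivAt G1 (G2 x) x := by
    intro x
    rw [hG1def, hG2def]
    simp only
    apply stmt5_hasDeriv f1' f2' u hd2 husum _ (hsum1' 0) x
    intro R hR k y hy
    apply hbnd R hR k (2*k-2) _ y (by omega) _ hy
    simp only [hf2', abs_mul, abs_two, Nat.abs_cast,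
      abs_of_nonneg (show (0:ℝ) ≤ 2*(k:ℝ)+2 by positivity)]
    have hk : (0:ℝ) ≤ (k:ℝ) := Nat.cast_nonneg k
    have h1 : |2*(k:ℝ)-1| ≤ 2*(k:ℝ)+1 := by
      rw [abs_le]; constructor <;> linarith
    have hc : (2*(k:ℝ)+1) * (2*(k:ℝ) * (2*(k:ℝ)+2)) ≤ (2*(k:ℝ)+3)^3 := by
      nlinarith [hk, mul_nonneg hk hk, mul_nonneg (mul_nonneg hk hk) hk]
    have h4 : |2*(k:ℝ)-1| * (2 * (k:ℝ) * ((2*(k:ℝ)+2) * |a (k+1)|))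
        ≤ (2*(k:ℝ)+1) * (2 * (k:ℝ) * ((2*(k:ℝ)+2) * |a (k+1)|)) :=
      mul_le_mul_of_nonneg_right h1 (by positivity)
    nlinarith [mul_le_mul_of_nonneg_right hc (abs_nonneg (a (k+1)))]
  -- the fundamental second-order relation
  have hB : ∀ x : ℝ, x^2 * G2 x + x * G1 x + (x^2 + 5/4) * G x = X0 x := by
    intro x
    have s2 : Summable (fun k => x^2 * f2' k x) := (hsum2' x).mul_left (x^2)
    have s1 : Summable (fun k => x * f1' k x) := (hsum1' x).mul_left x
    have s0 : Summable (fun k => (x^2+5/4) * f1 k x) := (hsum1 x).mul_left (x^2+5/4)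
    have hU : Summable (fun k => x^2 * f2' k x + (x * f1' k x + (x^2+5/4) * f1 k x)) :=
      s2.add (s1.add s0)
    have e : x^2 * G2 x + x * G1 x + (x^2+5/4) * G x
        = ∑' k, (x^2 * f2' k x + (x * f1' k x + (x^2+5/4) * f1 k x)) := by
      rw [s2.tsum_add (s1.add s0), s1.tsum_add s0,
        tsum_mul_left, tsum_mul_left, tsum_mul_left, hGdef, hG1def, hG2def]
      ring
    rw [e]
    -- auxiliary series
    set V : ℕ → ℝ := fun k => (-(2*(k:ℝ)+1)) * a (k+1) * (x^2)^(k+1) with hV_def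
    set W : ℕ → ℝ := fun k => (2*(k:ℝ)+2) * a (k+1) * (x^2)^(k+1) with hW_def
    have hsV : Summable V := by
      apply stmt5_summable a hb (x^2) (x^2) (sq_nonneg x) (sq_nonneg x)
      intro k
      have hk : (0:ℝ) ≤ (k:ℝ) := Nat.cast_nonneg k
      have hc : (2*(k:ℝ)+1) ≤ (2*(k:ℝ)+3)^3 := by
        nlinarith [hk, mul_nonneg hk hk, mul_nonneg (mul_nonneg hk hk) hk]
      have habs : |V k| = (2*(k:ℝ)+1) * |a (k+1)| * (x^2)^(k+1) := by
        rw [hV_def]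
        simp only
        rw [abs_mul, abs_mul, abs_neg, abs_pow,
          abs_of_nonneg (show (0:ℝ) ≤ 2*(k:ℝ)+1 by positivity),
          abs_of_nonneg (sq_nonneg x)]
      rw [habs, pow_succ]
      nlinarith [mul_le_mul_of_nonneg_right
        (mul_le_mul_of_nonneg_right hc (abs_nonneg (a (k+1))))
        (mul_nonneg (pow_nonneg (sq_nonneg x) k) (sq_nonneg x))]
    have hsW : Summable W := by
      apply stmt5_summable a hb (x^2) (x^2) (sq_nonneg x) (sq_nonneg x)
      intro k
      have hk : (0:ℝ) ≤ (k:ℝ) := Nat.cast_nonneg k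
      have hc : (2*(k:ℝ)+2) ≤ (2*(k:ℝ)+3)^3 := by
        nlinarith [hk, mul_nonneg hk hk, mul_nonneg (mul_nonneg hk hk) hk]
      have habs : |W k| = (2*(k:ℝ)+2) * |a (k+1)| * (x^2)^(k+1) := by
        rw [hW_def]
        simp only
        rw [abs_mul, abs_mul, abs_pow,
          abs_of_nonneg (show (0:ℝ) ≤ 2*(k:ℝ)+2 by positivity),
          abs_of_nonneg (sq_nonneg x)]
      rw [habs, pow_succ]
      nlinarith [mul_le_mul_of_nonneg_right
        (mul_le_mul_of_nonneg_right hc (abs_nonneg (a (k+1))))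
        (mul_nonneg (pow_nonneg (sq_nonneg x) k) (sq_nonneg x))]
    -- the term at k+1 simplifies using the recurrence
    have hUk : ∀ k : ℕ, x^2 * f2' (k+1) x + (x * f1' (k+1) x + (x^2+5/4) * f1 (k+1) x)
        = V k + W (k+1) := by
      intro k
      have hrec := harec (k+1) (by omega)
      push_cast at hrec
      simp only [hf1, hf1', hf2', hV_def, hW_def]
      rw [show 2*(k+1)-1 = 2*k+1 from by omega, show 2*(k+1)-2 = 2*k from by omega]
      rw [show ((x:ℝ)^2)^(k+1) = x^(2*k+2) from by rw [← pow_mul, show 2*(k+1) = 2*k+2 from by omega],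
        show ((x:ℝ)^2)^(k+1+1) = x^(2*k+4) from by rw [← pow_mul, show 2*(k+1+1) = 2*k+4 from by omega]]
      push_cast
      linear_combination (x^(2*k) * x^2) * hrec
    -- sum everything
    have hT : Summable (fun k : ℕ => a (k+1) * x^(2*(k+1))) := (hX0 x).summable
    have hT' : ∑' (k:ℕ), a (k+1) * x^(2*(k+1)) = X0 x - 5/2 := (hX0 x).tsum_eq
    have hVW : ∑' k, V k + ∑' k, W k = X0 x - 5/2 := by
      rw [← hsV.tsum_add hsW]
      rw [← hT']
      apply tsum_congr
      intro k
      rw [hV_def, hW_def]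
      simp only
      rw [show ((x:ℝ)^2)^(k+1) = x^(2*(k+1)) from by rw [← pow_mul]]
      ring
    have hWs : ∑' k, W (k+1) = ∑' k, W k - W 0 := by
      have := hsW.tsum_eq_zero_add
      linarith
    have hsWs : Summable (fun k => W (k+1)) := by
      rw [← summable_nat_add_iff 1] at hsW
      exact hsW
    calc ∑' k, (x^2 * f2' k x + (x * f1' k x + (x^2+5/4) * f1 k x))
        = (x^2 * f2' 0 x + (x * f1' 0 x + (x^2+5/4) * f1 0 x))
          + ∑' k, (x^2 * f2' (k+1) x + (x * f1' (k+1) x + (x^2+5/4) * f1 (k+1) x)) :=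
          hU.tsum_eq_zero_add
      _ = (x^2+5/4) * (2 * a 1) + ∑' k, (V k + W (k+1)) := by
          rw [tsum_congr hUk]
          simp [hf1, hf1', hf2']
      _ = (x^2+5/4) * (2 * a 1) + (∑' k, V k + ∑' k, W (k+1)) := by
          rw [hsV.tsum_add hsWs]
      _ = X0 x := by
          rw [hWs]
          have hW0 : W 0 = 2 * a 1 * (x^2) := by rw [hW_def]; simp
          rw [hW0, ha1]
          linarith [hVW]
  -- identification of g with G
  have hXd' : ∀ x : ℝ, deriv X0 x = x * G x := fun x => (hX0d x).deriv
  have hGcont : Continuous G :=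
    continuous_iff_continuousAt.mpr fun x => (hGd x).continuousAt
  have hgcont : Continuous g :=
    continuous_iff_continuousAt.mpr fun x =>
      (hganal x (Set.mem_univ x)).differentiableAt.continuousAt
  have hgG : g = G := by
    apply Continuous.ext_on (dense_compl_singleton (0:ℝ)) hgcont hGcont
    intro x hx
    have hx0 : x ≠ 0 := hx
    rw [hg x hx0, hXd' x, mul_div_cancel_left₀ _ hx0]
  have hG0 : G 0 = 2 := by rw [← hgG]; exact hg0
  have hX00 : X0 0 = 5/2 := by
    have h := hX0 0
    have hz : (fun k : ℕ => a (k+1) * (0:ℝ)^(2*(k+1))) = fun _ => (0:ℝ) := by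
      funext k
      rw [zero_pow (by omega : 2*(k+1) ≠ 0), mul_zero]
    rw [hz] at h
    have := h.unique hasSum_zero
    linarith
  -- the conserved quantity
  set F : ℝ → ℝ := fun x => 2 * G x * X0 x - (x^2 + 5/4) * (G x)^2 - x^2 * (G1 x)^2 with hF_def
  have hFd : ∀ x : ℝ, HasDerivAt F 0 x := by
    intro x
    have h1 : HasDerivAt (fun y => 2 * G y * X0 y)
        (2 * G1 x * X0 x + 2 * G x * (x * G x)) x := by
      exact ((hGd x).const_mul 2).mul (hX0d x)
    have h2 : HasDerivAt (fun y => (y^2 + 5/4) * (G y)^2)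
        (2*x*(G x)^2 + (x^2+5/4)*(2*G x*G1 x)) x := by
      have ha : HasDerivAt (fun y : ℝ => y^2 + 5/4) (2*x) x := by
        simpa using (hasDerivAt_pow 2 x).add_const (5/4 : ℝ)
      have hbb : HasDerivAt (fun y => (G y)^2) (2*G x*G1 x) x := by
        have h := (hGd x).pow 2
        refine h.congr_deriv ?_
        push_cast
        ring
      exact ha.mul hbb
    have h3 : HasDerivAt (fun y => y^2 * (G1 y)^2)
        (2*x*(G1 x)^2 + x^2*(2*G1 x*G2 x)) x := by
      have ha : HasDerivAt (fun y : ℝ => y^2) (2*x) x := by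
        simpa using hasDerivAt_pow 2 x
      have hbb : HasDerivAt (fun y => (G1 y)^2) (2*G1 x*G2 x) x := by
        have h := (hG1d x).pow 2
        refine h.congr_deriv ?_
        push_cast
        ring
      exact ha.mul hbb
    have h := (h1.sub h2).sub h3
    have hE : (2 * G1 x * X0 x + 2 * G x * (x * G x)) - (2*x*(G x)^2 + (x^2+5/4)*(2*G x*G1 x))
        - (2*x*(G1 x)^2 + x^2*(2*G1 x*G2 x)) = 0 := by
      linear_combination (-2) * G1 x * (hB x)
    rw [hE] at h
    exact h
  have hFc : ∀ x : ℝ, F x = 5 := by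
    intro x
    have h := is_const_of_deriv_eq_zero (f := F)
      (fun y => (hFd y).differentiableAt) (fun y => (hFd y).deriv) x 0
    rw [h, hF_def]
    simp only
    rw [hG0, hX00]
    norm_num
  -- positivity of G
  have hGne : ∀ y : ℝ, G y ≠ 0 := by
    intro y hy
    have h := hFc y
    rw [hF_def] at h
    simp only at h
    rw [hy] at h
    nlinarith [sq_nonneg (y * G1 y), h]
  have hGpos : ∀ x : ℝ, 0 < G x := by
    intro x
    rcases lt_trichotomy (G x) 0 with hneg | hzero | hpos
    · exfalso
      rcases le_or_gt 0 x with hx | hx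
      · have hiv := intermediate_value_Icc' hx hGcont.continuousOn
        have h0mem : (0:ℝ) ∈ Icc (G x) (G 0) := by
          constructor
          · linarith
          · rw [hG0]; norm_num
        obtain ⟨y, _, hy⟩ := hiv h0mem
        exact hGne y hy
      · have hiv := intermediate_value_Icc (le_of_lt hx) hGcont.continuousOn
        have h0mem : (0:ℝ) ∈ Icc (G x) (G 0) := by
          constructor
          · linarith
          · rw [hG0]; norm_num
        obtain ⟨y, _, hy⟩ := hiv h0mem
        exact hGne y hy
    · exact absurd hzero (hGne x)
    · exact hpos
  -- evenness
  have heven : ∀ x : ℝ, X0 (-x) = X0 x := by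
    intro x
    have h1 := hX0 x
    have h2 := hX0 (-x)
    have he : (fun k : ℕ => a (k+1) * (-x)^(2*(k+1))) = fun k : ℕ => a (k+1) * x^(2*(k+1)) := by
      funext k
      rw [Even.neg_pow ⟨k+1, by ring⟩]
    rw [he] at h2
    have := h2.unique h1
    linarith
  -- lower bound for X0
  have hmono : ∀ y : ℝ, 0 ≤ y → X0 0 ≤ X0 y := by
    intro y hy
    have hcont : Continuous X0 :=
      continuous_iff_continuousAt.mpr fun z => (hX0d z).continuousAt
    have hmo := monotoneOn_of_deriv_nonneg (convex_Icc (0:ℝ) y) hcont.continuousOn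
      (fun z _ => ((hX0d z).differentiableAt).differentiableWithinAt)
      (fun z hz => by
        rw [hXd' z]
        rw [interior_Icc] at hz
        exact mul_nonneg (le_of_lt hz.1) (le_of_lt (hGpos z)))
    exact hmo (left_mem_Icc.mpr hy) (right_mem_Icc.mpr hy) hy
  refine ⟨heven, ?_, ?_, ?_, ?_⟩
  · -- X0 ≥ 5/2
    intro x
    rcases le_or_gt 0 x with hx | hx
    · have := hmono x hx
      linarith [hX00]
    · have h1 := hmono (-x) (by linarith)
      have h2 := heven x
      rw [h2] at h1
      linarith [hX00]
  · -- g > 0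
    intro x
    rw [hgG]
    exact hGpos x
  · -- deriv X0 / x > 0
    intro x hx
    rw [hXd' x, mul_div_cancel_left₀ _ hx]
    exact hGpos x
  · -- 2 X0 - x X0' > 0
    intro x
    rw [hXd' x]
    have hFx := hFc x
    rw [hF_def] at hFx
    simp only at hFx
    have h1 : G x * (2 * X0 x - x * (x * G x))
        = 5 + (5/4) * (G x)^2 + x^2 * (G1 x)^2 := by
      linear_combination hFx
    have h2 : 0 < G x * (2 * X0 x - x * (x * G x)) := by
      rw [h1]
      positivity
    by_contra hcon
    push_neg at hcon
    nlinarith [h2, hGpos x, mul_nonneg (le_of_lt (hGpos x)) (neg_nonneg.mpr hcon)]
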